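/- Let S be a finite set with |S| = d, let ν_j (j ∈ S) be probability measures on [0,1], and let f be a ν-identifiable multinary-product tree on interval partitions 𝒫_j of [0,1] with |𝒫_j| = r for every j ∈ S, where r ≥ 2. Then f can be written as a sum of (r − 1)^d many ν-identifiable binary-product trees (multinary-product trees all of whose coordinate partitions have exactly two intervals), f = Σ_{k_1=1}^{r−1} ⋯ Σ_{k_d=1}^{r−1} f_{k_1,…,k_d}, with sup_{k_1,…,k_d} ‖f_{k_1,…,k_d}‖_∞ ≤ 2^d ‖f‖_∞. -/

import Mathlib

open MeasureTheory Finset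

noncomputable section

/-- `I 0, …, I (φ−1)` is an interval partition of `[0,1]`: the pieces are intervals
(order-connected sets), pairwise disjoint, and their union is `[0,1]`. -/
def IsIntervalPartition (φ : ℕ) (I : ℕ → Set ℝ) : Prop :=
  (∀ k < φ, (I k).OrdConnected) ∧
  (∀ k < φ, ∀ l < φ, k ≠ l → Disjoint (I k) (I l)) ∧
  (⋃ k ∈ Finset.range φ, I k) = Set.Icc (0 : ℝ) 1

/-- The multinary-product tree with coordinate partitions `P j 0, …, P j (φ j − 1)` and
heights `γ`: `f(x) = ∑_𝓵 γ_𝓵 ∏_j 𝟙(x_j ∈ I_{j,ℓ_j})`. -/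
def treeFun {ι : Type*} [Fintype ι] [DecidableEq ι] (φ : ι → ℕ) (P : ι → ℕ → Set ℝ)
    (γ : (ι → ℕ) → ℝ) (x : ι → ℝ) : ℝ :=
  ∑ 𝓵 ∈ Fintype.piFinset (fun j => Finset.range (φ j)),
    γ 𝓵 * ∏ j, Set.indicator (P j (𝓵 j)) (fun _ => (1 : ℝ)) (x j)

/-- The identifiability condition for the heights `γ` of a multinary-product tree with
respect to the weights `w j k` (the `ν_j`-masses of the pieces). -/
def IdentHeightsW {ι : Type*} [Fintype ι] [DecidableEq ι] (φ : ι → ℕ)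
    (w : ι → ℕ → ℝ) (γ : (ι → ℕ) → ℝ) : Prop :=
  ∀ j : ι, ∀ 𝓵 ∈ Fintype.piFinset (fun j => Finset.range (φ j)),
    ∑ k ∈ Finset.range (φ j), γ (Function.update 𝓵 j k) * w j k = 0

/-!
By identifiability, `f = ∑_𝓵 γ_𝓵 ∏_j (𝟙_{I_{j,ℓ_j}}(x_j) - ν_j(I_{j,ℓ_j}))`: expanding the
product, every term containing a factor `ν_j(I_{j,ℓ_j})` sums to zero over `ℓ_j`. Order the
pieces of each `𝒫_j` from left to right and let `B_{j,k}` be the union of the first `k` of them,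
so that `B_{j,k}, [0,1] \ B_{j,k}` is a two-interval partition. On `[0,1]` each centred indicator
telescopes, `𝟙_I - ν(I) = (𝟙_{B_{p+1}} - ν(B_{p+1})) - (𝟙_{B_p} - ν(B_p))` with `p` the position
of `I`, where `B_0 = ∅` and `B_r = [0,1]` make the boundary terms vanish. Multiplying out the
sums over `k_j ∈ {1, …, r-1}` writes `f` as a sum of binary-product trees, identifiable because
`𝟙_B - ν(B)` has mean zero. Their heights combine the `γ_𝓵` with coefficients whose absolute
values sum to at most 2 in each coordinate, and `|γ_𝓵| ≤ ‖f‖_∞` once the heights of empty cells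
are set to 0; this gives the bound `2^d ‖f‖_∞`.
-/

open Function

section Trees

variable {ι β : Type*} [Fintype ι] [DecidableEq ι]

theorem sum_mul_mul_eq_zero_of_sum_update_eq_zero {s : ι → Finset β} {γ : (ι → β) → ℝ}
    {i : ι} {w : β → ℝ} {F : (ι → β) → ℝ}
    (hγ : ∀ 𝓵 ∈ Fintype.piFinset s, ∑ k ∈ s i, γ (update 𝓵 i k) * w k = 0)
    (hF : ∀ 𝓵 k, F (update 𝓵 i k) = F 𝓵) :
    ∑ 𝓵 ∈ Fintype.piFinset s, γ 𝓵 * w (𝓵 i) * F 𝓵 = 0 := by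
  rcases (s i).eq_empty_or_nonempty with hs | hs
  · simp [Fintype.piFinset_eq_empty.2 ⟨i, hs⟩]
  have hcard : (#(s i) : ℝ) ≠ 0 := by exact_mod_cast hs.card_pos.ne'
  refine (mul_eq_zero.1 ?_).resolve_left hcard
  -- `(𝓵, k) ↦ (update 𝓵 i k, 𝓵 i)` is an involution of `piFinset s ×ˢ s i`
  calc (#(s i) : ℝ) * ∑ 𝓵 ∈ Fintype.piFinset s, γ 𝓵 * w (𝓵 i) * F 𝓵
      = ∑ p ∈ Fintype.piFinset s ×ˢ s i, γ p.1 * w (p.1 i) * F p.1 := by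
        simp [sum_product, mul_sum]
    _ = ∑ p ∈ Fintype.piFinset s ×ˢ s i, γ (update p.1 i p.2) * w p.2 * F p.1 := by
        have hmaps : ∀ p ∈ Fintype.piFinset s ×ˢ s i,
            (update p.1 i p.2, p.1 i) ∈ Fintype.piFinset s ×ˢ s i := fun p hp => by
          simp only [mem_product, Fintype.mem_piFinset] at hp ⊢
          exact ⟨fun j => by rcases eq_or_ne j i with rfl | hj <;> simp [*], hp.1 i⟩
        exact sum_nbij' _ _ hmaps hmaps (fun _ _ => by simp) (fun _ _ => by simp)
          fun _ _ => by simp [hF]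
    _ = ∑ 𝓵 ∈ Fintype.piFinset s, F 𝓵 * ∑ k ∈ s i, γ (update 𝓵 i k) * w k := by
        simp only [sum_product, mul_sum]
        exact sum_congr rfl fun _ _ => sum_congr rfl fun _ _ => by ring
    _ = 0 := sum_eq_zero fun 𝓵 h𝓵 => by rw [hγ 𝓵 h𝓵, mul_zero]

theorem IdentHeightsW.sum_mul_prod_sub {φ : ι → ℕ} {w : ι → ℕ → ℝ} {γ : (ι → ℕ) → ℝ}
    (hγ : IdentHeightsW φ w γ) (a : ι → ℕ → ℝ) :
    ∑ 𝓵 ∈ Fintype.piFinset (fun j => range (φ j)), γ 𝓵 * ∏ j, (a j (𝓵 j) - w j (𝓵 j)) =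
      ∑ 𝓵 ∈ Fintype.piFinset (fun j => range (φ j)), γ 𝓵 * ∏ j, a j (𝓵 j) := by
  simp_rw [sub_eq_add_neg, prod_add, mul_sum]
  rw [sum_comm, sum_eq_single univ (fun T _ hT => ?_) (by simp)]
  · simp
  obtain ⟨i, hi⟩ : ∃ i, i ∉ T := by
    by_contra! h
    exact hT (eq_univ_of_forall h)
  have hiT : i ∈ univ \ T := by simp [hi]
  rw [← sum_mul_mul_eq_zero_of_sum_update_eq_zero (hγ i)
    (F := fun 𝓵 => -((∏ j ∈ T, a j (𝓵 j)) * ∏ j ∈ (univ \ T).erase i, -w j (𝓵 j))) ?_]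
  · refine sum_congr rfl fun 𝓵 _ => ?_
    rw [← mul_prod_erase _ _ hiT]
    ring
  · intro 𝓵 k
    congr 2
    · exact prod_congr rfl fun j hj => by rw [update_of_ne (ne_of_mem_of_not_mem hj hi)]
    · exact prod_congr rfl fun j hj => by rw [update_of_ne (ne_of_mem_erase hj)]

def tensorHeights (s : ι → Finset ℕ) (c : ι → ℕ → ℕ → ℝ) (γ : (ι → ℕ) → ℝ)
    (ε : ι → ℕ) : ℝ :=
  ∑ 𝓵 ∈ Fintype.piFinset s, γ 𝓵 * ∏ j, c j (ε j) (𝓵 j)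

theorem treeFun_tensorHeights (φ : ι → ℕ) (Q : ι → ℕ → Set ℝ) (s : ι → Finset ℕ)
    (c : ι → ℕ → ℕ → ℝ) (γ : (ι → ℕ) → ℝ) (x : ι → ℝ) :
    treeFun φ Q (tensorHeights s c γ) x =
      ∑ 𝓵 ∈ Fintype.piFinset s, γ 𝓵 *
        ∏ j, ∑ e ∈ range (φ j), c j e (𝓵 j) * (Q j e).indicator (fun _ => 1) (x j) := by
  simp only [treeFun, tensorHeights, prod_univ_sum, sum_mul, mul_sum, prod_mul_distrib]
  rw [sum_comm]
  exact sum_congr rfl fun _ _ => sum_congr rfl fun _ _ => by ring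

theorem identHeightsW_tensorHeights {φ : ι → ℕ} {w : ι → ℕ → ℝ} {s : ι → Finset ℕ}
    {c : ι → ℕ → ℕ → ℝ} (hc : ∀ j l, ∑ e ∈ range (φ j), c j e l * w j e = 0)
    (γ : (ι → ℕ) → ℝ) : IdentHeightsW φ w (tensorHeights s c γ) := by
  intro j ε _
  simp only [tensorHeights, sum_mul]
  rw [sum_comm]
  refine sum_eq_zero fun 𝓵 _ => ?_
  have hsplit : ∀ e, ∏ i, c i (update ε j e i) (𝓵 i) =
      c j e (𝓵 j) * ∏ i ∈ univ.erase j, c i (ε i) (𝓵 i) := fun e => by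
    rw [← mul_prod_erase _ _ (mem_univ j), update_self]
    exact congrArg _ (prod_congr rfl fun i hi => by rw [update_of_ne (ne_of_mem_erase hi)])
  simp_rw [hsplit]
  rw [← mul_zero (γ 𝓵 * ∏ i ∈ univ.erase j, c i (ε i) (𝓵 i)), ← hc j (𝓵 j), mul_sum]
  exact sum_congr rfl fun _ _ => by ring

theorem abs_sum_mul_prod_le {s : ι → Finset β} {γ : (ι → β) → ℝ} {C : ℝ}
    (hγ : ∀ 𝓵 ∈ Fintype.piFinset s, |γ 𝓵| ≤ C) (a : ι → β → ℝ) :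
    |∑ 𝓵 ∈ Fintype.piFinset s, γ 𝓵 * ∏ j, a j (𝓵 j)| ≤ C * ∏ j, ∑ l ∈ s j, |a j l| :=
  calc |∑ 𝓵 ∈ Fintype.piFinset s, γ 𝓵 * ∏ j, a j (𝓵 j)|
      ≤ ∑ 𝓵 ∈ Fintype.piFinset s, |γ 𝓵| * ∏ j, |a j (𝓵 j)| := by
        simpa only [abs_mul, abs_prod] using abs_sum_le_sum_abs (fun 𝓵 => γ 𝓵 * ∏ j, a j (𝓵 j)) _
    _ ≤ ∑ 𝓵 ∈ Fintype.piFinset s, C * ∏ j, |a j (𝓵 j)| :=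
        sum_le_sum fun 𝓵 h𝓵 =>
          mul_le_mul_of_nonneg_right (hγ 𝓵 h𝓵) (prod_nonneg fun _ _ => abs_nonneg _)
    _ = C * ∏ j, ∑ l ∈ s j, |a j l| := by rw [← mul_sum, prod_univ_sum]

theorem abs_treeFun_le {φ : ι → ℕ} {P : ι → ℕ → Set ℝ} {γ : (ι → ℕ) → ℝ} {C : ℝ}
    (hP : ∀ j, (range (φ j) : Set ℕ).PairwiseDisjoint (P j)) (hC : 0 ≤ C)
    (hγ : ∀ 𝓵 ∈ Fintype.piFinset (fun j => range (φ j)), |γ 𝓵| ≤ C) (x : ι → ℝ) :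
    |treeFun φ P γ x| ≤ C := by
  have hcover : ∀ j, ∑ l ∈ range (φ j), |(P j l).indicator (fun _ => (1 : ℝ)) (x j)| ≤ 1 :=
    fun j => by
      simp_rw [abs_of_nonneg (Set.indicator_nonneg (fun _ _ => zero_le_one) _)]
      rw [← indicator_biUnion_apply _ _ (hP j)]
      exact Set.indicator_le_self' (fun _ _ => zero_le_one) _
  calc |treeFun φ P γ x| ≤ C * ∏ j, ∑ l ∈ range (φ j), |(P j l).indicator (fun _ => 1) (x j)| :=
        abs_sum_mul_prod_le hγ fun j l => (P j l).indicator (fun _ => 1) (x j)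
    _ ≤ C * 1 := by
        gcongr
        exact prod_le_one (fun _ _ => sum_nonneg fun _ _ => abs_nonneg _) fun j _ => hcover j
    _ = C := mul_one C

theorem treeFun_eq_of_mem {φ : ι → ℕ} {P : ι → ℕ → Set ℝ}
    (hP : ∀ j, (range (φ j) : Set ℕ).PairwiseDisjoint (P j)) (γ : (ι → ℕ) → ℝ)
    {𝓵 : ι → ℕ} (h𝓵 : 𝓵 ∈ Fintype.piFinset (fun j => range (φ j))) {x : ι → ℝ}
    (hx : ∀ j, x j ∈ P j (𝓵 j)) : treeFun φ P γ x = γ 𝓵 := by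
  rw [treeFun, sum_eq_single_of_mem 𝓵 h𝓵]
  · simp [Set.indicator_of_mem (hx _)]
  intro 𝓵' h𝓵' hne
  obtain ⟨j, hj⟩ := ne_iff.1 hne
  have hxj : x j ∉ P j (𝓵' j) := fun h =>
    Set.disjoint_left.1 (hP j (by simpa using Fintype.mem_piFinset.1 h𝓵' j)
      (by simpa using Fintype.mem_piFinset.1 h𝓵 j) hj) h (hx j)
  rw [prod_eq_zero (mem_univ j) (Set.indicator_of_notMem hxj _), mul_zero]

theorem treeFun_eq_zero_of_notMem {φ : ι → ℕ} {P : ι → ℕ → Set ℝ} (γ : (ι → ℕ) → ℝ)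
    {x : ι → ℝ} {j : ι} (hx : ∀ k < φ j, x j ∉ P j k) : treeFun φ P γ x = 0 :=
  sum_eq_zero fun 𝓵 h𝓵 => by
    rw [prod_eq_zero (mem_univ j) (Set.indicator_of_notMem
      (hx _ (by simpa using Fintype.mem_piFinset.1 h𝓵 j)) _), mul_zero]

open Classical in
def heightsOnNonempty (P : ι → ℕ → Set ℝ) (γ : (ι → ℕ) → ℝ) (𝓵 : ι → ℕ) : ℝ :=
  if ∀ j, (P j (𝓵 j)).Nonempty then γ 𝓵 else 0

theorem treeFun_heightsOnNonempty (φ : ι → ℕ) (P : ι → ℕ → Set ℝ) (γ : (ι → ℕ) → ℝ)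
    (x : ι → ℝ) : treeFun φ P (heightsOnNonempty P γ) x = treeFun φ P γ x := by
  refine sum_congr rfl fun 𝓵 _ => ?_
  rw [heightsOnNonempty]
  split_ifs with h
  · rfl
  push Not at h
  obtain ⟨j, hj⟩ := h
  rw [prod_eq_zero (mem_univ j) (by simp [hj]), mul_zero, mul_zero]

theorem identHeightsW_heightsOnNonempty {φ : ι → ℕ} {w : ι → ℕ → ℝ} {P : ι → ℕ → Set ℝ}
    {γ : (ι → ℕ) → ℝ} (hγ : IdentHeightsW φ w γ) (hw : ∀ j k, P j k = ∅ → w j k = 0) :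
    IdentHeightsW φ w (heightsOnNonempty P γ) := by
  classical
  intro j 𝓵 h𝓵
  have hterm : ∀ k, heightsOnNonempty P γ (update 𝓵 j k) * w j k =
      if ∀ i ≠ j, (P i (𝓵 i)).Nonempty then γ (update 𝓵 j k) * w j k else 0 := fun k => by
    rcases (P j k).eq_empty_or_nonempty with hk | hk
    · simp [hw j k hk]
    · simp only [heightsOnNonempty, forall_update_iff 𝓵 fun i e => (P i e).Nonempty, hk,
        true_and]
      split_ifs <;> simp
  simp_rw [hterm]
  split_ifs
  · exact hγ j 𝓵 h𝓵
  · simp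

theorem abs_heightsOnNonempty_le {φ : ι → ℕ} {P : ι → ℕ → Set ℝ} {γ : (ι → ℕ) → ℝ}
    (hP : ∀ j, (range (φ j) : Set ℕ).PairwiseDisjoint (P j)) {B : ℝ}
    (hB : ∀ x, |treeFun φ P γ x| ≤ B) {𝓵 : ι → ℕ}
    (h𝓵 : 𝓵 ∈ Fintype.piFinset (fun j => range (φ j))) : |heightsOnNonempty P γ 𝓵| ≤ B := by
  rw [heightsOnNonempty]
  split_ifs with h
  · choose x hx using h
    exact treeFun_eq_of_mem hP γ h𝓵 hx ▸ hB x
  · simpa using (abs_nonneg _).trans (hB 0)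

end Trees

section Rank

variable {β : Type*} [LinearOrder β]

def rankIn (f : ℕ → β) (s : Finset ℕ) (k : ℕ) : ℕ := #{l ∈ s | f l < f k}

variable {f : ℕ → β} {s : Finset ℕ} {k l : ℕ}

theorem rankIn_lt_rankIn (hk : k ∈ s) (h : f k < f l) : rankIn f s k < rankIn f s l :=
  card_lt_card <| (ssubset_iff_of_subset fun m hm => by
    simp only [mem_filter] at hm ⊢
    exact ⟨hm.1, hm.2.trans h⟩).2 ⟨k, by simp [hk, h], by simp⟩

theorem rankIn_lt_card (hk : k ∈ s) : rankIn f s k < #s :=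
  card_lt_card (filter_ssubset.2 ⟨k, hk, lt_irrefl _⟩)

theorem rankIn_injOn (hf : Injective f) : Set.InjOn (rankIn f s) s := by
  intro k hk l hl h
  by_contra hne
  rcases (hf.ne hne).lt_or_gt with hlt | hlt
  · exact (rankIn_lt_rankIn hk hlt).ne h
  · exact (rankIn_lt_rankIn hl hlt).ne' h

end Rank

theorem Set.OrdConnected.le_of_disjoint {α : Type*} [LinearOrder α] {s t : Set α}
    (hs : s.OrdConnected) (ht : t.OrdConnected) (hst : Disjoint s t) {a b : α} (ha : a ∈ s)
    (hb : b ∈ t) (hab : a ≤ b) {c d : α} (hc : c ∈ s) (hd : d ∈ t) : c ≤ d := by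
  by_contra! hdc
  rcases le_or_gt a d with had | hda
  · exact hst.ne_of_mem (hs.out ha hc ⟨had, hdc.le⟩) hd rfl
  · exact hst.ne_of_mem ha (ht.out hd hb ⟨hda.le, hab⟩) rfl

theorem sInf_add_sSup_lt_sInf_add_sSup {s t : Set ℝ} (hs : BddBelow s) (ht : BddAbove t)
    (hst : ∀ c ∈ s, ∀ d ∈ t, c ≤ d) {a b : ℝ} (ha : a ∈ s) (hb : b ∈ t) (hab : a < b) :
    sInf s + sSup s < sInf t + sSup t := by
  have h₁ : sInf s ≤ a := csInf_le hs ha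
  have h₂ : sSup s ≤ sInf t := csSup_le ⟨a, ha⟩ fun c hc => le_csInf ⟨b, hb⟩ (hst c hc)
  have h₃ : b ≤ sSup t := le_csSup ht hb
  linarith

namespace IsIntervalPartition

variable {r : ℕ} {I : ℕ → Set ℝ}

theorem subset_Icc (hI : IsIntervalPartition r I) {k : ℕ} (hk : k < r) :
    I k ⊆ Set.Icc 0 1 :=
  hI.2.2 ▸ Set.subset_biUnion_of_mem (u := I) (mem_range.2 hk)

theorem exists_mem (hI : IsIntervalPartition r I) {x : ℝ} (hx : x ∈ Set.Icc (0 : ℝ) 1) :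
    ∃ k < r, x ∈ I k := by
  simpa [← hI.2.2] using hx

theorem pairwiseDisjoint (hI : IsIntervalPartition r I) :
    (range r : Set ℕ).PairwiseDisjoint I :=
  fun k hk l hl hkl => hI.2.1 k (by simpa using hk) l (by simpa using hl) hkl

theorem measurableSet (hI : IsIntervalPartition r I) {k : ℕ} (hk : k < r) :
    MeasurableSet (I k) :=
  (hI.1 k hk).measurableSet

end IsIntervalPartition

-- Pieces are ordered from left to right by the midpoints of their hulls; the index only
-- breaks ties between empty pieces.
def pieceKey (I : ℕ → Set ℝ) (k : ℕ) : ℝ ×ₗ ℕ := toLex (sInf (I k) + sSup (I k), k)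

def pieceRank (I : ℕ → Set ℝ) (r : ℕ) : ℕ → ℕ := rankIn (pieceKey I) (range r)

def lowerUnion (I : ℕ → Set ℝ) (r t : ℕ) : Set ℝ :=
  ⋃ k ∈ {k ∈ range r | pieceRank I r k < t}, I k

def lowerSplit (I : ℕ → Set ℝ) (r t e : ℕ) : Set ℝ :=
  if e = 0 then lowerUnion I r t else Set.Icc 0 1 \ lowerUnion I r t

section Geometry

variable {r : ℕ} {I : ℕ → Set ℝ}

theorem pieceKey_injective : Injective (pieceKey I) :=
  fun _ _ h => (Prod.ext_iff.1 (toLex.injective h)).2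

theorem pieceRank_lt {k : ℕ} (hk : k < r) : pieceRank I r k < r :=
  (rankIn_lt_card (mem_range.2 hk)).trans_eq (card_range r)

theorem pieceRank_injOn : Set.InjOn (pieceRank I r) (range r) := rankIn_injOn pieceKey_injective

theorem pieceRank_lt_pieceRank (hI : IsIntervalPartition r I) {k l : ℕ} (hk : k < r)
    (hl : l < r) (hkl : k ≠ l) {a b : ℝ} (ha : a ∈ I k) (hb : b ∈ I l) (hab : a ≤ b) :
    pieceRank I r k < pieceRank I r l := by
  have hdisj := hI.2.1 k hk l hl hkl
  refine rankIn_lt_rankIn (mem_range.2 hk) (Prod.Lex.toLex_lt_toLex.2 (Or.inl ?_))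
  exact sInf_add_sSup_lt_sInf_add_sSup (bddBelow_Icc.mono (hI.subset_Icc hk))
    (bddAbove_Icc.mono (hI.subset_Icc hl))
    (fun c hc d hd => (hI.1 k hk).le_of_disjoint (hI.1 l hl) hdisj ha hb hab hc hd) ha hb
    (hab.lt_of_ne (hdisj.ne_of_mem ha hb))

theorem mem_lowerUnion {t : ℕ} {x : ℝ} :
    x ∈ lowerUnion I r t ↔ ∃ k < r, pieceRank I r k < t ∧ x ∈ I k := by
  simp [lowerUnion, and_assoc]

theorem lowerUnion_zero : lowerUnion I r 0 = ∅ := by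
  ext
  simp [mem_lowerUnion]

theorem lowerUnion_subset_Icc (hI : IsIntervalPartition r I) (t : ℕ) :
    lowerUnion I r t ⊆ Set.Icc 0 1 := fun _ hx => by
  obtain ⟨k, hk, -, hxk⟩ := mem_lowerUnion.1 hx
  exact hI.subset_Icc hk hxk

theorem lowerUnion_self (hI : IsIntervalPartition r I) : lowerUnion I r r = Set.Icc 0 1 := by
  refine (lowerUnion_subset_Icc hI r).antisymm fun x hx => ?_
  obtain ⟨k, hk, hxk⟩ := hI.exists_mem hx
  exact mem_lowerUnion.2 ⟨k, hk, pieceRank_lt hk, hxk⟩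

theorem mem_lowerUnion_of_le (hI : IsIntervalPartition r I) {t : ℕ} {x y : ℝ}
    (hy : y ∈ Set.Icc (0 : ℝ) 1) (hyx : y ≤ x) (hx : x ∈ lowerUnion I r t) :
    y ∈ lowerUnion I r t := by
  obtain ⟨m, hm, hmt, hxm⟩ := mem_lowerUnion.1 hx
  obtain ⟨l, hl, hyl⟩ := hI.exists_mem hy
  refine mem_lowerUnion.2 ⟨l, hl, ?_, hyl⟩
  rcases eq_or_ne l m with rfl | hlm
  · exact hmt
  · exact (pieceRank_lt_pieceRank hI hl hm hlm hyl hxm hyx).trans hmt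

theorem lowerUnion_pieceRank_succ {l : ℕ} (hl : l < r) :
    lowerUnion I r (pieceRank I r l + 1) = lowerUnion I r (pieceRank I r l) ∪ I l := by
  ext x
  simp only [mem_lowerUnion, Set.mem_union, Nat.lt_succ_iff_lt_or_eq]
  constructor
  · rintro ⟨k, hk, hkl | hkl, hxk⟩
    · exact Or.inl ⟨k, hk, hkl, hxk⟩
    · exact Or.inr (pieceRank_injOn (mem_range.2 hk) (mem_range.2 hl) hkl ▸ hxk)
  · rintro (⟨k, hk, hkl, hxk⟩ | hxl)
    · exact ⟨k, hk, Or.inl hkl, hxk⟩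
    · exact ⟨l, hl, Or.inr rfl, hxl⟩

theorem disjoint_lowerUnion_pieceRank (hI : IsIntervalPartition r I) {l : ℕ} (hl : l < r) :
    Disjoint (lowerUnion I r (pieceRank I r l)) (I l) := by
  refine Set.disjoint_left.2 fun x hx hxl => ?_
  obtain ⟨k, hk, hkl, hxk⟩ := mem_lowerUnion.1 hx
  exact Set.disjoint_left.1 (hI.2.1 k hk l hl (by rintro rfl; exact hkl.false)) hxk hxl

theorem measurableSet_lowerUnion (hI : IsIntervalPartition r I) (t : ℕ) :
    MeasurableSet (lowerUnion I r t) :=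
  Finset.measurableSet_biUnion _ fun _ hk => hI.measurableSet (mem_range.1 (mem_filter.1 hk).1)

theorem isIntervalPartition_lowerSplit (hI : IsIntervalPartition r I) (t : ℕ) :
    IsIntervalPartition 2 (lowerSplit I r t) := by
  have hsub := lowerUnion_subset_Icc hI t
  refine ⟨fun e he => ?_, fun e he e' he' hee' => ?_, ?_⟩
  · interval_cases e
    · exact ⟨fun x hx z hz y hy => mem_lowerUnion_of_le hI
        ⟨(hsub hx).1.trans hy.1, hy.2.trans (hsub hz).2⟩ hy.2 hz⟩
    · exact ⟨fun x hx z hz y hy => ⟨⟨hx.1.1.trans hy.1, hy.2.trans hz.1.2⟩,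
        fun hyB => hx.2 (mem_lowerUnion_of_le hI hx.1 hy.1 hyB)⟩⟩
  · interval_cases e <;> interval_cases e' <;> simp_all [lowerSplit, Set.disjoint_sdiff_right,
      Set.disjoint_sdiff_left]
  · simp [show range 2 = {0, 1} from rfl, lowerSplit, Set.union_sdiff_cancel hsub]

end Geometry

section SplitCoefficients

variable {r : ℕ} {I : ℕ → Set ℝ} {ν : Measure ℝ}

theorem measureReal_lowerUnion_pieceRank_succ [IsFiniteMeasure ν] (hI : IsIntervalPartition r I)
    {l : ℕ} (hl : l < r) :
    ν.real (lowerUnion I r (pieceRank I r l + 1)) =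
      ν.real (lowerUnion I r (pieceRank I r l)) + ν.real (I l) := by
  rw [lowerUnion_pieceRank_succ hl,
    measureReal_union (disjoint_lowerUnion_pieceRank hI hl) (hI.measurableSet hl)]

theorem measureReal_Icc_sdiff_lowerUnion [IsFiniteMeasure ν] (hI : IsIntervalPartition r I)
    (hν : ν (Set.Icc 0 1) = 1) (t : ℕ) :
    ν.real (Set.Icc 0 1 \ lowerUnion I r t) = 1 - ν.real (lowerUnion I r t) := by
  rw [measureReal_sdiff (lowerUnion_subset_Icc hI t) (measurableSet_lowerUnion hI t),
    measureReal_def, hν, ENNReal.toReal_one]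

-- With `B = lowerUnion I r` and `p` the rank of `I l`, `𝟙 (I l) - ν (I l)` telescopes as
-- `(𝟙 (B (p + 1)) - ν (B (p + 1))) - (𝟙 (B p) - ν (B p))`; the second factor is the centred
-- indicator of `B k`, written on the two pieces of `lowerSplit I r k`.
def splitCoeff (ν : Measure ℝ) (I : ℕ → Set ℝ) (r k e l : ℕ) : ℝ :=
  ((if k = pieceRank I r l + 1 then 1 else 0) - (if k = pieceRank I r l then 1 else 0)) *
    ((if e = 0 then 1 else 0) - ν.real (lowerUnion I r k))

theorem sum_Icc_telescope {r p : ℕ} (hp : p < r) {g : ℕ → ℝ} (h₀ : g 0 = 0) (hr : g r = 0) :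
    ∑ k ∈ Icc 1 (r - 1), ((if k = p + 1 then 1 else 0) - (if k = p then 1 else 0)) * g k =
      g (p + 1) - g p := by
  have h₁ : (if p + 1 ∈ Icc 1 (r - 1) then g (p + 1) else 0) = g (p + 1) := by
    split_ifs with h
    · rfl
    · rw [show p + 1 = r by simp at h; omega, hr]
  have h₂ : (if p ∈ Icc 1 (r - 1) then g p else 0) = g p := by
    split_ifs with h
    · rfl
    · rw [show p = 0 by simp at h; omega, h₀]
  simp only [sub_mul, ite_mul, one_mul, zero_mul, sum_sub_distrib, sum_ite_eq', h₁, h₂]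

theorem sum_splitCoeff_mul_indicator_lowerSplit {k l : ℕ} {x : ℝ}
    (hx : x ∈ Set.Icc (0 : ℝ) 1) :
    ∑ e ∈ range 2, splitCoeff ν I r k e l * (lowerSplit I r k e).indicator (fun _ => 1) x =
      ((if k = pieceRank I r l + 1 then 1 else 0) - (if k = pieceRank I r l then 1 else 0)) *
        ((lowerUnion I r k).indicator (fun _ => 1) x - ν.real (lowerUnion I r k)) := by
  by_cases hB : x ∈ lowerUnion I r k <;>
    simp [splitCoeff, lowerSplit, sum_range_succ, hB, hx]

theorem sum_sum_splitCoeff_mul_indicator [IsFiniteMeasure ν] (hI : IsIntervalPartition r I)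
    (hν : ν (Set.Icc 0 1) = 1) {l : ℕ} (hl : l < r) {x : ℝ} (hx : x ∈ Set.Icc (0 : ℝ) 1) :
    ∑ k ∈ Icc 1 (r - 1), ∑ e ∈ range 2,
        splitCoeff ν I r k e l * (lowerSplit I r k e).indicator (fun _ => 1) x =
      (I l).indicator (fun _ => 1) x - ν.real (I l) := by
  simp_rw [sum_splitCoeff_mul_indicator_lowerSplit hx]
  rw [sum_Icc_telescope (pieceRank_lt hl)
    (g := fun k => (lowerUnion I r k).indicator (fun _ => (1 : ℝ)) x - ν.real (lowerUnion I r k))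
    (by simp [lowerUnion_zero]) (by simp [lowerUnion_self hI, hx, measureReal_def, hν]),
    measureReal_lowerUnion_pieceRank_succ hI hl, lowerUnion_pieceRank_succ hl,
    Set.indicator_union_of_disjoint (disjoint_lowerUnion_pieceRank hI hl)]
  ring

theorem sum_splitCoeff_mul_measureReal_lowerSplit [IsFiniteMeasure ν]
    (hI : IsIntervalPartition r I) (hν : ν (Set.Icc 0 1) = 1) (k l : ℕ) :
    ∑ e ∈ range 2, splitCoeff ν I r k e l * ν.real (lowerSplit I r k e) = 0 := by
  simp [sum_range_succ, splitCoeff, lowerSplit, measureReal_Icc_sdiff_lowerUnion hI hν]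
  ring

theorem sum_ite_eq_le_one {s : Finset ℕ} {f : ℕ → ℕ} (hf : Set.InjOn f s) (k : ℕ) :
    ∑ l ∈ s, (if k = f l then (1 : ℝ) else 0) ≤ 1 := by
  rw [sum_boole]
  exact_mod_cast card_le_one.2 fun a ha b hb => by
    simp only [mem_filter] at ha hb
    exact hf ha.1 hb.1 (ha.2.symm.trans hb.2)

theorem sum_abs_splitCoeff_le [IsProbabilityMeasure ν] (k e : ℕ) :
    ∑ l ∈ range r, |splitCoeff ν I r k e l| ≤ 2 := by
  have hmass : |(if e = 0 then (1 : ℝ) else 0) - ν.real (lowerUnion I r k)| ≤ 1 := by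
    have h₀ : 0 ≤ ν.real (lowerUnion I r k) := measureReal_nonneg
    have h₁ : ν.real (lowerUnion I r k) ≤ 1 := measureReal_le_one
    rw [abs_le]
    split_ifs <;> constructor <;> linarith
  have hstep : ∑ l ∈ range r,
      |(if k = pieceRank I r l + 1 then (1 : ℝ) else 0) - (if k = pieceRank I r l then 1 else 0)|
        ≤ 2 :=
    calc _ ≤ ∑ l ∈ range r, ((if k = pieceRank I r l + 1 then (1 : ℝ) else 0) +
          (if k = pieceRank I r l then 1 else 0)) :=
          sum_le_sum fun l _ => (abs_sub _ _).trans (by split_ifs <;> norm_num)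
      _ ≤ 1 + 1 := by
          rw [sum_add_distrib]
          exact add_le_add
            (sum_ite_eq_le_one ((add_left_injective 1).comp_injOn pieceRank_injOn) k)
            (sum_ite_eq_le_one pieceRank_injOn k)
      _ = 2 := one_add_one_eq_two
  simp_rw [splitCoeff, abs_mul, ← sum_mul]
  simpa using mul_le_mul hstep hmass (abs_nonneg _) zero_le_two

end SplitCoefficients

section Decomposition

variable {ι : Type*} [Fintype ι] [DecidableEq ι] {ν : ι → Measure ℝ} {r : ℕ}
  {P : ι → ℕ → Set ℝ} {γ : (ι → ℕ) → ℝ}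

def splitHeights (ν : ι → Measure ℝ) (r : ℕ) (P : ι → ℕ → Set ℝ) (γ : (ι → ℕ) → ℝ)
    (κ : ι → ℕ) : (ι → ℕ) → ℝ :=
  tensorHeights (fun _ => range r) (fun j => splitCoeff (ν j) (P j) r (κ j))
    (heightsOnNonempty P γ)

theorem treeFun_eq_sum_treeFun_splitHeights [∀ j, IsFiniteMeasure (ν j)]
    (hpart : ∀ j, IsIntervalPartition r (P j)) (hν : ∀ j, ν j (Set.Icc 0 1) = 1)
    (hident : IdentHeightsW (fun _ => r) (fun j k => (ν j).real (P j k)) γ) (x : ι → ℝ) :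
    treeFun (fun _ => r) P γ x =
      ∑ κ ∈ Fintype.piFinset (fun _ : ι => Icc 1 (r - 1)),
        treeFun (fun _ => 2) (fun j => lowerSplit (P j) r (κ j)) (splitHeights ν r P γ κ) x := by
  by_cases hx : ∀ j, x j ∈ Set.Icc (0 : ℝ) 1
  · have hident' := identHeightsW_heightsOnNonempty (P := P) hident fun j k h => by simp [h]
    calc treeFun (fun _ => r) P γ x = treeFun (fun _ => r) P (heightsOnNonempty P γ) x :=
          (treeFun_heightsOnNonempty _ P γ x).symm
      _ = ∑ 𝓵 ∈ Fintype.piFinset (fun _ => range r), heightsOnNonempty P γ 𝓵 *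
            ∏ j, ((P j (𝓵 j)).indicator (fun _ => 1) (x j) - (ν j).real (P j (𝓵 j))) :=
          (hident'.sum_mul_prod_sub fun j l => (P j l).indicator (fun _ => 1) (x j)).symm
      _ = ∑ 𝓵 ∈ Fintype.piFinset (fun _ => range r), heightsOnNonempty P γ 𝓵 *
            ∏ j, ∑ k ∈ Icc 1 (r - 1), ∑ e ∈ range 2, splitCoeff (ν j) (P j) r k e (𝓵 j) *
              (lowerSplit (P j) r k e).indicator (fun _ => 1) (x j) := by
          refine sum_congr rfl fun 𝓵 h𝓵 => congrArg _ (prod_congr rfl fun j _ => ?_)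
          exact (sum_sum_splitCoeff_mul_indicator (hpart j) (hν j)
            (by simpa using Fintype.mem_piFinset.1 h𝓵 j) (hx j)).symm
      _ = ∑ κ ∈ Fintype.piFinset (fun _ : ι => Icc 1 (r - 1)),
            ∑ 𝓵 ∈ Fintype.piFinset (fun _ => range r), heightsOnNonempty P γ 𝓵 *
              ∏ j, ∑ e ∈ range 2, splitCoeff (ν j) (P j) r (κ j) e (𝓵 j) *
                (lowerSplit (P j) r (κ j) e).indicator (fun _ => 1) (x j) := by
          rw [sum_comm]
          exact sum_congr rfl fun 𝓵 _ => by rw [prod_univ_sum, mul_sum]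
      _ = _ := sum_congr rfl fun κ _ => (treeFun_tensorHeights _ _ _ _ _ x).symm
  · push Not at hx
    obtain ⟨j, hj⟩ := hx
    rw [treeFun_eq_zero_of_notMem γ fun k hk h => hj ((hpart j).subset_Icc hk h)]
    refine (sum_eq_zero fun κ _ => ?_).symm
    exact treeFun_eq_zero_of_notMem _ fun e he h =>
      hj ((isIntervalPartition_lowerSplit (hpart j) (κ j)).subset_Icc he h)

theorem identHeightsW_splitHeights [∀ j, IsFiniteMeasure (ν j)]
    (hpart : ∀ j, IsIntervalPartition r (P j)) (hν : ∀ j, ν j (Set.Icc 0 1) = 1)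
    (κ : ι → ℕ) :
    IdentHeightsW (fun _ => 2) (fun j e => (ν j).real (lowerSplit (P j) r (κ j) e))
      (splitHeights ν r P γ κ) :=
  identHeightsW_tensorHeights
    (fun j l => sum_splitCoeff_mul_measureReal_lowerSplit (hpart j) (hν j) (κ j) l) _

theorem abs_splitHeights_le [∀ j, IsProbabilityMeasure (ν j)]
    (hpart : ∀ j, IsIntervalPartition r (P j)) {B : ℝ}
    (hB : ∀ x, |treeFun (fun _ => r) P γ x| ≤ B) (κ ε : ι → ℕ) :
    |splitHeights ν r P γ κ ε| ≤ 2 ^ Fintype.card ι * B := by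
  have hB₀ : 0 ≤ B := (abs_nonneg _).trans (hB 0)
  calc |splitHeights ν r P γ κ ε|
      ≤ B * ∏ j, ∑ l ∈ range r, |splitCoeff (ν j) (P j) r (κ j) (ε j) l| :=
        abs_sum_mul_prod_le
          (fun _ h𝓵 => abs_heightsOnNonempty_le (fun j => (hpart j).pairwiseDisjoint) hB h𝓵) _
    _ ≤ B * ∏ _j : ι, 2 := by
        gcongr with j
        exact sum_abs_splitCoeff_le _ _
    _ = 2 ^ Fintype.card ι * B := by rw [prod_const, card_univ, mul_comm]

theorem abs_treeFun_splitHeights_le [∀ j, IsProbabilityMeasure (ν j)]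
    (hpart : ∀ j, IsIntervalPartition r (P j)) {B : ℝ}
    (hB : ∀ x, |treeFun (fun _ => r) P γ x| ≤ B) (κ : ι → ℕ) (x : ι → ℝ) :
    |treeFun (fun _ => 2) (fun j => lowerSplit (P j) r (κ j)) (splitHeights ν r P γ κ) x| ≤
      2 ^ Fintype.card ι * B :=
  abs_treeFun_le (fun j => (isIntervalPartition_lowerSplit (hpart j) (κ j)).pairwiseDisjoint)
    (mul_nonneg (by positivity) ((abs_nonneg _).trans (hB 0)))
    (fun ε _ => abs_splitHeights_le hpart hB κ ε) x

end Decomposition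

theorem stmt8_general {ι : Type*} [Fintype ι] [DecidableEq ι]
    (ν : ι → Measure ℝ) [∀ j, IsProbabilityMeasure (ν j)]
    (hsupp : ∀ j, ν j (Set.Icc (0 : ℝ) 1) = 1)
    (r : ℕ)
    (P : ι → ℕ → Set ℝ) (hpart : ∀ j, IsIntervalPartition r (P j))
    (γ : (ι → ℕ) → ℝ)
    (hident : IdentHeightsW (fun _ => r) (fun j k => (ν j (P j k)).toReal) γ) :
    ∃ (Q : (ι → ℕ) → ι → ℕ → Set ℝ) (γ' : (ι → ℕ) → (ι → ℕ) → ℝ),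
      (∀ x : ι → ℝ, treeFun (fun _ => r) P γ x =
          ∑ κ ∈ Fintype.piFinset (fun _ : ι => Finset.Icc 1 (r - 1)),
            treeFun (fun _ => 2) (Q κ) (γ' κ) x) ∧
      (∀ κ ∈ Fintype.piFinset (fun _ : ι => Finset.Icc 1 (r - 1)),
          ∀ j : ι, IsIntervalPartition 2 (Q κ j)) ∧
      (∀ κ ∈ Fintype.piFinset (fun _ : ι => Finset.Icc 1 (r - 1)),
          IdentHeightsW (fun _ => 2) (fun j k => (ν j (Q κ j k)).toReal) (γ' κ)) ∧
      (∀ B : ℝ, (∀ x : ι → ℝ, |treeFun (fun _ => r) P γ x| ≤ B) →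
          ∀ κ ∈ Fintype.piFinset (fun _ : ι => Finset.Icc 1 (r - 1)), ∀ x : ι → ℝ,
            |treeFun (fun _ => 2) (Q κ) (γ' κ) x| ≤ 2 ^ (Fintype.card ι) * B) :=
  ⟨fun κ j => lowerSplit (P j) r (κ j), splitHeights ν r P γ,
    treeFun_eq_sum_treeFun_splitHeights hpart hsupp hident,
    fun κ _ j => isIntervalPartition_lowerSplit (hpart j) (κ j),
    fun κ _ => identHeightsW_splitHeights hpart hsupp κ,
    fun _ hB κ _ => abs_treeFun_splitHeights_le hpart hB κ⟩

/-- a ν-identifiable multinary-product tree whose coordinate partitions all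
have `r ≥ 2` pieces decomposes as a sum of `(r−1)^d` ν-identifiable binary-product trees
(multinary-product trees with two-piece interval partitions in every coordinate), whose sup
norms are at most `2^d ‖f‖_∞`. -/
theorem stmt8 {ι : Type*} [Fintype ι] [DecidableEq ι]
    (ν : ι → Measure ℝ) [∀ j, IsProbabilityMeasure (ν j)]
    (hsupp : ∀ j, ν j (Set.Icc (0 : ℝ) 1) = 1)
    (r : ℕ) (hr : 2 ≤ r)
    (P : ι → ℕ → Set ℝ) (hpart : ∀ j, IsIntervalPartition r (P j))
    (γ : (ι → ℕ) → ℝ)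
    (hident : IdentHeightsW (fun _ => r) (fun j k => (ν j (P j k)).toReal) γ) :
    ∃ (Q : (ι → ℕ) → ι → ℕ → Set ℝ) (γ' : (ι → ℕ) → (ι → ℕ) → ℝ),
      (∀ x : ι → ℝ, treeFun (fun _ => r) P γ x =
          ∑ κ ∈ Fintype.piFinset (fun _ : ι => Finset.Icc 1 (r - 1)),
            treeFun (fun _ => 2) (Q κ) (γ' κ) x) ∧
      (∀ κ ∈ Fintype.piFinset (fun _ : ι => Finset.Icc 1 (r - 1)),
          ∀ j : ι, IsIntervalPartition 2 (Q κ j)) ∧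
      (∀ κ ∈ Fintype.piFinset (fun _ : ι => Finset.Icc 1 (r - 1)),
          IdentHeightsW (fun _ => 2) (fun j k => (ν j (Q κ j k)).toReal) (γ' κ)) ∧
      (∀ B : ℝ, (∀ x : ι → ℝ, |treeFun (fun _ => r) P γ x| ≤ B) →
          ∀ κ ∈ Fintype.piFinset (fun _ : ι => Finset.Icc 1 (r - 1)), ∀ x : ι → ℝ,
            |treeFun (fun _ => 2) (Q κ) (γ' κ) x| ≤ 2 ^ (Fintype.card ι) * B) :=
  stmt8_general ν hsupp r P hpart γ hident

end
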